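/- For positive integers k, n, s: H_k^{(s)}(x_1,...,x_n) satisfies the recurrence H_k^{(s)}(x_1,...,x_n) = (-x_n)^{s+1} H_{k-s-1}^{(s)}(x_1,...,x_n) + H_k^{(s)}(x_1,...,x_{n-1}) + x_n H_{k-1}^{(s)}(x_1,...,x_{n-1}). -/

import Mathlib

/-- Generating series of the generalized complete symmetric functions. -/
noncomputable def HgS (s n : ℕ) (x : Fin n → ℂ) : PowerSeries ℂ :=
  ∏ i, (∑ j ∈ Finset.range (s + 1), PowerSeries.C ((-x i) ^ j) * PowerSeries.X ^ j)⁻¹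

/-- `H_k^{(s)}(x₁,…,xₙ)` with the convention that it vanishes for negative index `k`. -/
noncomputable def Hg (s n : ℕ) (x : Fin n → ℂ) (k : ℤ) : ℂ :=
  if k < 0 then 0 else PowerSeries.coeff k.toNat (HgS s n x)

/-!
Each variable `a` contributes the factor `(∑_{j ≤ s} (-a t)^j)⁻¹`, and the truncated geometric sum
`∑_{j ≤ s} (-a t)^j` equals `(1 - (-a t)^{s+1}) / (1 + a t)`. Hence
`(1 - (-xₙ t)^{s+1}) · HgS(x₁,…,xₙ) = (1 + xₙ t) · HgS(x₁,…,x_{n-1})`,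
and comparing coefficients of `t^k` gives the recurrence.
-/

open PowerSeries

section TruncatedGeometric

variable {R : Type*} [CommRing R]

theorem truncGeom_mul_one_add (a : R) (s : ℕ) :
    (∑ j ∈ Finset.range (s + 1), C ((-a) ^ j) * X ^ j) * (1 + C a * X) =
      1 - C ((-a) ^ (s + 1)) * X ^ (s + 1) := by
  have hpow (j : ℕ) : C ((-a) ^ j) * X ^ j = (-(C a * X)) ^ j := by
    rw [← neg_mul, ← map_neg, mul_pow, map_pow]
  simp only [hpow]
  rw [← sub_neg_eq_add 1, geom_sum_mul_neg]

theorem constantCoeff_truncGeom (a : R) (s : ℕ) :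
    constantCoeff (∑ j ∈ Finset.range (s + 1), C ((-a) ^ j) * X ^ j) = 1 := by
  simp [map_sum, Finset.sum_range_succ', constantCoeff_X]

end TruncatedGeometric

theorem HgS_succ (s n : ℕ) (x : Fin (n + 1) → ℂ) :
    HgS s (n + 1) x = HgS s n (x ∘ Fin.castSucc) *
      (∑ j ∈ Finset.range (s + 1), C ((-x (Fin.last n)) ^ j) * X ^ j)⁻¹ :=
  Fin.prod_univ_castSucc _

theorem HgS_succ_recurrence (s n : ℕ) (x : Fin (n + 1) → ℂ) :
    HgS s (n + 1) x =
      C ((-x (Fin.last n)) ^ (s + 1)) * X ^ (s + 1) * HgS s (n + 1) x +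
        HgS s n (x ∘ Fin.castSucc) + C (x (Fin.last n)) * X * HgS s n (x ∘ Fin.castSucc) := by
  set f := ∑ j ∈ Finset.range (s + 1), C ((-x (Fin.last n)) ^ j) * X ^ j
  have hf : f * f⁻¹ = 1 :=
    PowerSeries.mul_inv_cancel f (by rw [constantCoeff_truncGeom]; exact one_ne_zero)
  have hgeom := truncGeom_mul_one_add (x (Fin.last n)) s
  rw [HgS_succ]
  linear_combination -(HgS s n (x ∘ Fin.castSucc) * f⁻¹) * hgeom +
    (1 + C (x (Fin.last n)) * X) * HgS s n (x ∘ Fin.castSucc) * hf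

theorem Hg_natCast_sub (s n : ℕ) (x : Fin n → ℂ) (k m : ℕ) :
    Hg s n x ((k : ℤ) - m) = coeff k (X ^ m * HgS s n x) := by
  rw [Hg, coeff_X_pow_mul']
  by_cases hmk : m ≤ k
  · rw [if_neg (by omega), if_pos hmk]
    congr
    omega
  · rw [if_pos (by omega), if_neg hmk]

theorem Hg_natCast (s n : ℕ) (x : Fin n → ℂ) (k : ℕ) :
    Hg s n x k = coeff k (HgS s n x) := by
  simpa using Hg_natCast_sub s n x k 0

theorem stmt17_general (k n s : ℕ) (x : Fin (n + 1) → ℂ) :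
    Hg s (n + 1) x (k : ℤ) =
      (-x (Fin.last n)) ^ (s + 1) * Hg s (n + 1) x ((k : ℤ) - s - 1) +
        Hg s n (x ∘ Fin.castSucc) (k : ℤ) +
        x (Fin.last n) * Hg s n (x ∘ Fin.castSucc) ((k : ℤ) - 1) := by
  have hcoeff := congrArg (coeff k) (HgS_succ_recurrence s n x)
  simp only [map_add, mul_assoc, coeff_C_mul] at hcoeff
  have hsub : (k : ℤ) - s - 1 = (k : ℤ) - (s + 1 : ℕ) := by push_cast; ring
  have hprev := Hg_natCast_sub s n (x ∘ Fin.castSucc) k 1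
  rw [Nat.cast_one, pow_one] at hprev
  rw [hsub, Hg_natCast_sub, hprev, Hg_natCast, Hg_natCast]
  exact hcoeff

/-- `H_k^{(s)}(x₁,…,xₙ) = (-xₙ)^{s+1} H_{k-s-1}^{(s)}(x₁,…,xₙ)
 + H_k^{(s)}(x₁,…,x_{n-1}) + xₙ H_{k-1}^{(s)}(x₁,…,x_{n-1})`,
stated with `n + 1` variables. -/
theorem stmt17 (k n s : ℕ) (hk : 0 < k) (hs : 0 < s) (x : Fin (n + 1) → ℂ) :
    Hg s (n + 1) x (k : ℤ) =
      (-x (Fin.last n)) ^ (s + 1) * Hg s (n + 1) x ((k : ℤ) - s - 1) +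
        Hg s n (x ∘ Fin.castSucc) (k : ℤ) +
        x (Fin.last n) * Hg s n (x ∘ Fin.castSucc) ((k : ℤ) - 1) :=
  stmt17_general k n s x
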